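/- In the ring M_n, for any two disjoint subsets A, B of [n], one has h(A) · (Σ_{a ∈ A, b ∈ B} x_{a,b}) = 0. -/
import Mathlib


open MvPolynomial

/-- The defining relations of the ring `M_n`: diagonal generators vanish, `x_{a,b}² = 0`,
`x_{a,b}·x_{a,c} = 0` for distinct `a,b,c`, and the Ptolemy relations
`x_{a,b}x_{c,d} + x_{a,c}x_{b,d} + x_{a,d}x_{b,c} = 0` for distinct `a,b,c,d`. -/
def relSet (n : ℕ) : Set (MvPolynomial (Sym2 (Fin n)) ℚ) :=
  {p | (∃ a : Fin n, p = X s(a, a)) ∨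
       (∃ a b : Fin n, a ≠ b ∧ p = X s(a, b) * X s(a, b)) ∨
       (∃ a b c : Fin n, a ≠ b ∧ a ≠ c ∧ b ≠ c ∧ p = X s(a, b) * X s(a, c)) ∨
       (∃ a b c d : Fin n, a ≠ b ∧ a ≠ c ∧ a ≠ d ∧ b ≠ c ∧ b ≠ d ∧ c ≠ d ∧
         p = X s(a, b) * X s(c, d) + X s(a, c) * X s(b, d) + X s(a, d) * X s(b, c))}

/-- The ring `M_n`, presented by generators `x_{a,b}` for two-element subsets `{a,b}` of `[n]`
subject to the relations in `relSet`. -/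
abbrev Mring (n : ℕ) := MvPolynomial (Sym2 (Fin n)) ℚ ⧸ Ideal.span (relSet n)

/-- The generator `x_{a,b}` of `M_n`. -/
noncomputable def xg {n : ℕ} (a b : Fin n) : Mring n :=
  Ideal.Quotient.mk _ (X s(a, b))

/-- `h(A) = Σ_{{a,b} ⊆ A} x_{a,b}`, the sum over two-element subsets of `A`. -/
noncomputable def hA {n : ℕ} (A : Finset (Fin n)) : Mring n :=
  ∑ a ∈ A, ∑ b ∈ A.filter (fun b => a < b), xg a b

lemma mk_mem_zero {n : ℕ} {p : MvPolynomial (Sym2 (Fin n)) ℚ} (hp : p ∈ relSet n) :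
    (Ideal.Quotient.mk (Ideal.span (relSet n)) p) = 0 :=
  Ideal.Quotient.eq_zero_iff_mem.2 (Ideal.subset_span hp)

lemma xg_comm {n : ℕ} (a b : Fin n) : xg a b = xg b a := by
  unfold xg; rw [Sym2.eq_swap]

lemma xg_diag {n : ℕ} (a : Fin n) : xg a a = 0 :=
  mk_mem_zero (Or.inl ⟨a, rfl⟩)

lemma xg_adj {n : ℕ} {a b c : Fin n} (hab : a ≠ b) (hac : a ≠ c) (hbc : b ≠ c) :
    xg a b * xg a c = 0 := by
  have : xg a b * xg a c =
      Ideal.Quotient.mk (Ideal.span (relSet n)) (X s(a, b) * X s(a, c)) := by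
    simp [xg]
  rw [this]
  exact mk_mem_zero (Or.inr <| Or.inr <| Or.inl ⟨a, b, c, hab, hac, hbc, rfl⟩)

lemma ptolemy {n : ℕ} {a b c d : Fin n} (hab : a ≠ b) (hac : a ≠ c) (had : a ≠ d)
    (hbc : b ≠ c) (hbd : b ≠ d) (hcd : c ≠ d) :
    xg a b * xg c d + xg a c * xg b d + xg a d * xg b c = 0 := by
  have : xg a b * xg c d + xg a c * xg b d + xg a d * xg b c =
      Ideal.Quotient.mk (Ideal.span (relSet n))
        (X s(a, b) * X s(c, d) + X s(a, c) * X s(b, d) + X s(a, d) * X s(b, c)) := by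
    simp only [xg, ← map_mul, ← map_add]
  rw [this]
  exact mk_mem_zero (Or.inr <| Or.inr <| Or.inr
    ⟨a, b, c, d, hab, hac, had, hbc, hbd, hcd, rfl⟩)

lemma triple {n : ℕ} {p q a b : Fin n} (hpb : p ≠ b) (hqb : q ≠ b) (hab : a ≠ b) :
    xg p q * xg a b + xg p a * xg q b + xg q a * xg p b = 0 := by
  by_cases hpq : p = q
  · subst hpq
    by_cases hpa : p = a
    · subst hpa; simp [xg_diag]
    · have h1 : xg p a * xg p b = 0 := xg_adj hpa hpb hab
      have h2 : xg a p * xg p b = 0 := by rw [xg_comm a p]; exact h1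
      simp [xg_diag, h1, h2]
  · by_cases hpa : p = a
    · subst hpa
      have h1 : xg p q * xg p b = 0 := xg_adj hpq hpb hqb
      have h2 : xg q p * xg p b = 0 := by rw [xg_comm q p]; exact h1
      simp [xg_diag, h1, h2]
    · by_cases hqa : q = a
      · subst hqa
        have h1 : xg p q * xg q b = 0 := by
          rw [xg_comm p q]; exact xg_adj (Ne.symm hpq) hqb hpb
        simp [xg_diag, h1]
      · have := ptolemy hpq hpa hpb hqa hqb hab
        rw [mul_comm (xg p b) (xg q a)] at this
        linear_combination this

lemma cancel {n : ℕ} (z : Mring n) (k : ℚ) (hk : k ≠ 0) (h : k • z = 0) : z = 0 := by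
  have h2 := congrArg (fun w => k⁻¹ • w) h
  simpa [smul_smul, inv_mul_cancel₀ hk] using h2

lemma two_hA {n : ℕ} (A : Finset (Fin n)) : ∑ a ∈ A, ∑ b ∈ A, xg a b = 2 * hA A := by
  have key : ∀ a b : Fin n, xg a b =
      (if a < b then xg a b else 0) + (if b < a then xg a b else 0) := by
    intro a b
    rcases lt_trichotomy a b with h | h | h
    · simp [h, not_lt.2 h.le]
    · subst h; simp [xg_diag]
    · simp [h, not_lt.2 h.le]
  calc ∑ a ∈ A, ∑ b ∈ A, xg a b
      = (∑ a ∈ A, ∑ b ∈ A, if a < b then xg a b else 0)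
        + (∑ a ∈ A, ∑ b ∈ A, if b < a then xg a b else 0) := by
        rw [← Finset.sum_add_distrib]
        refine Finset.sum_congr rfl fun a _ => ?_
        rw [← Finset.sum_add_distrib]
        exact Finset.sum_congr rfl fun b _ => key a b
    _ = hA A + hA A := by
        congr 1
        · unfold hA
          exact Finset.sum_congr rfl fun a _ => (Finset.sum_filter _ _).symm
        · rw [Finset.sum_comm]
          unfold hA
          refine Finset.sum_congr rfl fun a _ => ?_
          rw [← Finset.sum_filter]
          exact Finset.sum_congr rfl fun b _ => xg_comm b a
    _ = 2 * hA A := by ring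

/-- In `M_n`, for disjoint `A, B ⊆ [n]`, `h(A)·(Σ_{a ∈ A, b ∈ B} x_{a,b}) = 0`. -/
theorem hA_mul_cross_sum_eq_zero (n : ℕ) (A B : Finset (Fin n)) (hAB : Disjoint A B) :
    hA A * (∑ a ∈ A, ∑ b ∈ B, xg a b) = 0 := by
  refine cancel _ 2 two_ne_zero ?_
  rw [two_smul, ← two_mul, ← mul_assoc, ← two_hA]
  rw [Finset.sum_comm (s := A) (t := B), Finset.mul_sum]
  refine Finset.sum_eq_zero fun b hb => ?_
  have hbA : b ∉ A := fun h => (Finset.disjoint_left.mp hAB h hb).elim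
  set S : Mring n := (∑ p ∈ A, ∑ q ∈ A, xg p q) * ∑ a ∈ A, xg a b with hS
  have hSe : S = ∑ p ∈ A, ∑ q ∈ A, ∑ a ∈ A, xg p q * xg a b := by
    rw [hS, Finset.sum_mul]
    refine Finset.sum_congr rfl fun p _ => ?_
    rw [Finset.sum_mul]
    exact Finset.sum_congr rfl fun q _ => Finset.mul_sum _ _ _
  have hS2 : S = ∑ p ∈ A, ∑ q ∈ A, ∑ a ∈ A, xg p a * xg q b := by
    rw [hSe]
    exact Finset.sum_congr rfl fun p _ => Finset.sum_comm
  have hS3 : S = ∑ p ∈ A, ∑ q ∈ A, ∑ a ∈ A, xg q a * xg p b := by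
    rw [hS2]; exact Finset.sum_comm
  refine cancel _ 3 three_ne_zero ?_
  have h3 : (3 : ℚ) • S = S + S + S := by
    rw [show (3 : ℚ) = 1 + 1 + 1 by norm_num, add_smul, add_smul, one_smul]
  rw [h3]
  nth_rewrite 1 [hSe]
  nth_rewrite 1 [hS2]
  rw [hS3, ← Finset.sum_add_distrib, ← Finset.sum_add_distrib]
  refine Finset.sum_eq_zero fun p hp => ?_
  rw [← Finset.sum_add_distrib, ← Finset.sum_add_distrib]
  refine Finset.sum_eq_zero fun q hq => ?_
  rw [← Finset.sum_add_distrib, ← Finset.sum_add_distrib]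
  refine Finset.sum_eq_zero fun a ha => ?_
  exact triple (fun h => hbA (h ▸ hp)) (fun h => hbA (h ▸ hq)) (fun h => hbA (h ▸ ha))
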